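/- In the space of upper unitriangular 3×3 real matrices, write u = [[1, p, q], [0, 1, r], [0, 0, 1]], and let x_1(a) = I + a·E_{12}, x_2(a) = I + a·E_{23}. The set X = {u : p ≥ 0, q ≥ 0, r ≥ 0, p·r − q ≥ 0, and 2·q = p·r} is the disjoint union of the four sets: {I}; {x_1(a) : a > 0}; {x_2(a) : a > 0}; and {x_2(b)·x_1(a)·x_1(a)·x_2(b) : a > 0, b > 0}. -/

import Mathlib

/-- The Chevalley generator `x₁(a) = I + a·E₁₂` of the upper unitriangular subgroup of `SL₃(ℝ)`. -/
def x1 (a : ℝ) : Matrix (Fin 3) (Fin 3) ℝ := !![1, a, 0; 0, 1, 0; 0, 0, 1]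

/-- The Chevalley generator `x₂(a) = I + a·E₂₃` of the upper unitriangular subgroup of `SL₃(ℝ)`. -/
def x2 (a : ℝ) : Matrix (Fin 3) (Fin 3) ℝ := !![1, 0, 0; 0, 1, a; 0, 0, 1]

/-- `X = U^{+τ}_{≥0}` for `SL₃(ℝ)`: totally nonnegative unitriangular matrices fixed by `τ`. -/
def Xset : Set (Matrix (Fin 3) (Fin 3) ℝ) :=
  {u | ∃ p q r : ℝ, 0 ≤ p ∧ 0 ≤ q ∧ 0 ≤ r ∧ 0 ≤ p * r - q ∧ 2 * q = p * r ∧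
    u = !![1, p, q; 0, 1, r; 0, 0, 1]}

/-- The cell indexed by `w = 1`. -/
def C1 : Set (Matrix (Fin 3) (Fin 3) ℝ) := {(1 : Matrix (Fin 3) (Fin 3) ℝ)}

/-- The cell indexed by `w = s₁`. -/
def C2 : Set (Matrix (Fin 3) (Fin 3) ℝ) := {u | ∃ a : ℝ, 0 < a ∧ u = x1 a}

/-- The cell indexed by `w = s₂`. -/
def C3 : Set (Matrix (Fin 3) (Fin 3) ℝ) := {u | ∃ a : ℝ, 0 < a ∧ u = x2 a}

/-- The cell indexed by `w = s₁s₂s₁`. -/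
def C4 : Set (Matrix (Fin 3) (Fin 3) ℝ) :=
  {u | ∃ a b : ℝ, 0 < a ∧ 0 < b ∧ u = x2 b * x1 a * x1 a * x2 b}

/-!
A matrix of `X` is determined by its entries `(p, q, r)`, and `2q = pr` forces `q = 0` as soon as
`p` or `r` vanishes. Since `x₂(b) x₁(a) x₁(a) x₂(b)` has entries `(2a, 2ab, 2b)`, the four cells are
the parts of `X` on which each of `p` and `r` is either zero or positive.
-/

def unitriangular {R : Type*} [Zero R] [One R] (v : R × R × R) : Matrix (Fin 3) (Fin 3) R :=
  !![1, v.1, v.2.1; 0, 1, v.2.2; 0, 0, 1]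

theorem unitriangular_injective {R : Type*} [Zero R] [One R] :
    Function.Injective (unitriangular (R := R)) := by
  intro v w h
  have h₀₁ := congrFun (congrFun h 0) 1
  have h₀₂ := congrFun (congrFun h 0) 2
  have h₁₂ := congrFun (congrFun h 1) 2
  simp only [unitriangular, Matrix.of_apply, Matrix.cons_val, Matrix.cons_val_zero,
    Matrix.cons_val_one] at h₀₁ h₀₂ h₁₂
  exact Prod.ext h₀₁ (Prod.ext h₀₂ h₁₂)

theorem x2_mul_x1_mul_x1_mul_x2 (a b : ℝ) :
    x2 b * x1 a * x1 a * x2 b = unitriangular (2 * a, 2 * a * b, 2 * b) := by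
  simp only [x1, x2, unitriangular, Matrix.mul_fin_three]
  ring_nf

theorem Xset_eq_image : Xset = unitriangular ''
    {(p, q, r) : ℝ × ℝ × ℝ | 0 ≤ p ∧ 0 ≤ q ∧ 0 ≤ r ∧ 0 ≤ p * r - q ∧ 2 * q = p * r} := by
  ext u
  constructor
  · rintro ⟨p, q, r, hp, hq, hr, hpq, h, rfl⟩
    exact ⟨(p, q, r), ⟨hp, hq, hr, hpq, h⟩, rfl⟩
  · rintro ⟨⟨p, q, r⟩, ⟨hp, hq, hr, hpq, h⟩, rfl⟩
    exact ⟨p, q, r, hp, hq, hr, hpq, h, rfl⟩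

theorem C1_eq_image : C1 = unitriangular '' {(0 : ℝ × ℝ × ℝ)} := by
  rw [Set.image_singleton, C1, Matrix.one_fin_three]
  rfl

theorem C2_eq_image :
    C2 = unitriangular '' {(p, q, r) : ℝ × ℝ × ℝ | 0 < p ∧ q = 0 ∧ r = 0} := by
  ext u
  constructor
  · rintro ⟨a, ha, rfl⟩
    exact ⟨(a, 0, 0), ⟨ha, rfl, rfl⟩, rfl⟩
  · rintro ⟨⟨p, q, r⟩, ⟨hp, rfl, rfl⟩, rfl⟩
    exact ⟨p, hp, rfl⟩

theorem C3_eq_image :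
    C3 = unitriangular '' {(p, q, r) : ℝ × ℝ × ℝ | p = 0 ∧ q = 0 ∧ 0 < r} := by
  ext u
  constructor
  · rintro ⟨a, ha, rfl⟩
    exact ⟨(0, 0, a), ⟨rfl, rfl, ha⟩, rfl⟩
  · rintro ⟨⟨p, q, r⟩, ⟨rfl, rfl, hr⟩, rfl⟩
    exact ⟨r, hr, rfl⟩

theorem C4_eq_image :
    C4 = unitriangular '' {(p, q, r) : ℝ × ℝ × ℝ | 0 < p ∧ 0 < r ∧ 2 * q = p * r} := by
  ext u
  constructor
  · rintro ⟨a, b, ha, hb, rfl⟩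
    exact ⟨(2 * a, 2 * a * b, 2 * b), ⟨by positivity, by positivity, by ring⟩,
      (x2_mul_x1_mul_x1_mul_x2 a b).symm⟩
  · rintro ⟨⟨p, q, r⟩, ⟨hp, hr, hq⟩, rfl⟩
    refine ⟨p / 2, r / 2, half_pos hp, half_pos hr, ?_⟩
    rw [x2_mul_x1_mul_x1_mul_x2]
    congr 1
    ext <;> dsimp only
    · ring
    · linear_combination hq / 2
    · ring

theorem tnn_tau_fixed_params_eq_union :
    {(p, q, r) : ℝ × ℝ × ℝ | 0 ≤ p ∧ 0 ≤ q ∧ 0 ≤ r ∧ 0 ≤ p * r - q ∧ 2 * q = p * r} =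
      {0} ∪ {(p, q, r) : ℝ × ℝ × ℝ | 0 < p ∧ q = 0 ∧ r = 0} ∪
        {(p, q, r) : ℝ × ℝ × ℝ | p = 0 ∧ q = 0 ∧ 0 < r} ∪
          {(p, q, r) : ℝ × ℝ × ℝ | 0 < p ∧ 0 < r ∧ 2 * q = p * r} := by
  ext ⟨p, q, r⟩
  simp only [Set.mem_ofPred_eq, Set.mem_union, Set.mem_singleton_iff, Prod.mk_eq_zero]
  constructor
  · rintro ⟨hp, -, hr, -, h⟩
    rcases hp.eq_or_lt with rfl | hp <;> rcases hr.eq_or_lt with rfl | hr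
    · exact .inl (.inl (.inl ⟨rfl, by linarith, rfl⟩))
    · exact .inl (.inr ⟨rfl, by linarith, hr⟩)
    · exact .inl (.inl (.inr ⟨hp, by linarith, rfl⟩))
    · exact .inr ⟨hp, hr, h⟩
  · rintro (((⟨rfl, rfl, rfl⟩ | ⟨hp, rfl, rfl⟩) | ⟨rfl, rfl, hr⟩) | ⟨hp, hr, h⟩)
    all_goals refine ⟨?_, ?_, ?_, ?_, ?_⟩ <;> nlinarith

/-- Lusztig 2.1(b) for `SL₃(ℝ)`: `U^{+τ}_{≥0}` is the disjoint union of the four cells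
indexed by the involutions `1, s₁, s₂, s₁s₂s₁` of `S₃`. -/
theorem cell_decomposition_SL3 :
    Xset = C1 ∪ C2 ∪ C3 ∪ C4 ∧
    Disjoint C1 C2 ∧ Disjoint C1 C3 ∧ Disjoint C1 C4 ∧
    Disjoint C2 C3 ∧ Disjoint C2 C4 ∧ Disjoint C3 C4 := by
  rw [Xset_eq_image, C1_eq_image, C2_eq_image, C3_eq_image, C4_eq_image]
  refine ⟨by simp only [tnn_tau_fixed_params_eq_union, Set.image_union], ?_⟩
  simp only [Set.disjoint_image_iff unitriangular_injective]
  -- any two parameter sets are separated by the sign of `p` or of `r`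
  refine ⟨?_, ?_, ?_, ?_, ?_, ?_⟩ <;>
    refine Set.disjoint_left.2 fun ⟨p, q, r⟩ h₁ h₂ => ?_ <;>
    simp only [Set.mem_ofPred_eq, Set.mem_singleton_iff, Prod.mk_eq_zero] at h₁ h₂ <;>
    linarith [h₁.1, h₂.1, h₁.2.2, h₂.2.2]
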